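/- arXiv:1809.08172 — 2 statements merged into one kernel-verified Lean document; each statement's English description precedes it below -/
import Mathlib

section
/- Let γ ∈ ℤ^{n+m} and let r, l, r', l' be integers with 1 ≤ r ≤ n, γ_r = l − 1, 1 ≤ l' ≤ m, and γ_{n+l'} = r' − n − 1. Set μ = γ + ε_r and λ = γ + ε_{n+l'}. Then ⟨λ, λ + 2ρ⟩ − ⟨μ, μ + 2ρ⟩ = 2(l' − r') − 2(l − r). -/
/-! Common definitions: the weight lattice `ℤ^{n+m}` is modeled as functions `ℕ → ℤ`
(only the coordinates `1, …, n+m` are relevant), with standard basis vectors `eps i`.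
Index `i` has parity 0 if `i ≤ n` and parity 1 otherwise. -/

namespace TwoBoundary

/-- The standard basis vector `ε_i` of the weight lattice. -/
def eps (i : ℕ) : ℕ → ℤ := fun k => if k = i then 1 else 0

/-- The sign of the positive root `ε_i − ε_j`: `+1` if it is even
(i.e. the parities of `i` and `j` agree), `−1` if it is odd. -/
def rootSign (n i j : ℕ) : ℤ := if (i ≤ n) = (j ≤ n) then 1 else -1

/-- `2ρ` = (sum of even positive roots) − (sum of odd positive roots). -/
def twoRho (n m : ℕ) : ℕ → ℤ :=
  ∑ i ∈ Finset.Icc 1 (n + m), ∑ j ∈ Finset.Icc 1 (n + m),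
    if i < j then rootSign n i j • (eps i - eps j) else 0

/-- The bilinear form with `⟨ε_i, ε_j⟩ = (−1)^{parity i} δ_{ij}`. -/
def form (n m : ℕ) (μ ν : ℕ → ℤ) : ℤ :=
  ∑ i ∈ Finset.Icc 1 (n + m), (if i ≤ n then (1 : ℤ) else -1) * (μ i * ν i)

/-- `φ_t = ε_1 + ⋯ + ε_t`. -/
def phi (t : ℕ) : ℕ → ℤ := fun k => if 1 ≤ k ∧ k ≤ t then 1 else 0

/-- `ψ_s = ε_{n+1} + ⋯ + ε_{n+s}`. -/
def psi (n s : ℕ) : ℕ → ℤ := fun k => if n + 1 ≤ k ∧ k ≤ n + s then 1 else 0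

/-- A partition, given by its sequence of parts `λ_1 ≥ λ_2 ≥ ⋯` (the index-0 value
is normalized to `0`): weakly decreasing with finitely many nonzero terms. -/
def IsPartition (lam : ℕ → ℕ) : Prop :=
  lam 0 = 0 ∧ (∀ i, 1 ≤ i → lam (i + 1) ≤ lam i) ∧ ∃ N, ∀ i, N ≤ i → lam i = 0

/-- A hook partition (relative to `(n, m)`): a partition with `λ_{n+1} ≤ m`. -/
def IsHookPartition (n m : ℕ) (lam : ℕ → ℕ) : Prop :=
  IsPartition lam ∧ lam (n + 1) ≤ m

/-- The weight `λ̄` associated to a hook partition `λ`: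
`λ̄_i = λ_i` for `1 ≤ i ≤ n`, and `λ̄_{n+j} = #{k > n : λ_k ≥ j}` for `1 ≤ j ≤ m`. -/
noncomputable def barWeight (n m : ℕ) (lam : ℕ → ℕ) : ℕ → ℤ := fun i =>
  if 1 ≤ i ∧ i ≤ n then (lam i : ℤ)
  else if n + 1 ≤ i ∧ i ≤ n + m then ({k : ℕ | n < k ∧ i - n ≤ lam k}.ncard : ℤ)
  else 0

/-- The set `𝒫₀` of partitions occurring in the decomposition of
`L((a^p)) ⊗ L((b^q))` (for `q ≤ p`), by the combinatorial description of
Okada and Stanley. -/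
def InP0 (a b p q : ℕ) (lam : ℕ → ℕ) : Prop :=
  IsPartition lam ∧
  (∀ i, p + q < i → lam i = 0) ∧
  (∀ i, 1 ≤ i → i ≤ q → lam i + lam (p + q + 1 - i) = a + b) ∧
  (∀ i, q + 1 ≤ i → i ≤ p → lam i = a) ∧
  (∀ i, 1 ≤ i → i ≤ q → max a b ≤ lam i)

lemma twoRho_apply (n m k : ℕ) (hk : k ∈ Finset.Icc 1 (n + m)) :
    twoRho n m k =
      (∑ j ∈ Finset.Icc 1 (n + m), if k < j then rootSign n k j else 0)
      - (∑ i ∈ Finset.Icc 1 (n + m), if i < k then rootSign n i k else 0) := by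
  unfold twoRho
  simp only [Finset.sum_apply, apply_ite (fun f : ℕ → ℤ => f k), Pi.zero_apply, Pi.smul_apply, Pi.sub_apply, smul_eq_mul, eps]
  have h1 : ∀ i ∈ Finset.Icc 1 (n+m), ∀ j ∈ Finset.Icc 1 (n+m),
      (if i < j then rootSign n i j * ((if k = i then (1:ℤ) else 0) - (if k = j then 1 else 0)) else 0)
      = (if k = i then (if i < j then rootSign n i j else 0) else 0)
        - (if k = j then (if i < j then rootSign n i j else 0) else 0) := by
    intro i _ j _
    split_ifs <;> omega
  rw [Finset.sum_congr rfl fun i hi => Finset.sum_congr rfl fun j hj => h1 i hi j hj]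
  simp only [Finset.sum_sub_distrib]
  congr 1
  · have h2 : ∀ i, (∑ j ∈ Finset.Icc 1 (n+m), if k = i then (if i < j then rootSign n i j else 0) else (0:ℤ))
        = if k = i then (∑ j ∈ Finset.Icc 1 (n+m), if i < j then rootSign n i j else 0) else 0 := by
      intro i; split_ifs <;> simp
    rw [Finset.sum_congr rfl fun i _ => h2 i, Finset.sum_ite_eq, if_pos hk]
  · rw [Finset.sum_comm]
    have h2 : ∀ j, (∑ i ∈ Finset.Icc 1 (n+m), if k = j then (if i < j then rootSign n i j else 0) else (0:ℤ))
        = if k = j then (∑ i ∈ Finset.Icc 1 (n+m), if i < j then rootSign n i j else 0) else 0 := by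
      intro j; split_ifs <;> simp
    rw [Finset.sum_congr rfl fun j _ => h2 j, Finset.sum_ite_eq, if_pos hk]


lemma count_sum (N a b : ℕ) (P : ℕ → Prop) [DecidablePred P]
    (h : ∀ j, j ∈ Finset.Icc 1 N → (P j ↔ a ≤ j ∧ j ≤ b)) :
    (∑ j ∈ Finset.Icc 1 N, if P j then (1:ℤ) else 0)
      = ((Finset.Icc (max 1 a) (min N b)).card : ℤ) := by
  rw [Finset.sum_boole]
  congr 1
  congr 1
  ext j
  simp only [Finset.mem_filter, Finset.mem_Icc, le_min_iff, max_le_iff]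
  constructor
  · rintro ⟨hj, hP⟩
    have := (h j (Finset.mem_Icc.mpr hj)).mp hP
    omega
  · rintro ⟨h1, h2⟩
    have hj : j ∈ Finset.Icc 1 N := Finset.mem_Icc.mpr ⟨h1.1, h2.1⟩
    exact ⟨Finset.mem_Icc.mp hj, (h j hj).mpr ⟨h1.2, h2.2⟩⟩

lemma twoRho_even (n m k : ℕ) (h1 : 1 ≤ k) (h2 : k ≤ n) :
    twoRho n m k = (n : ℤ) + 1 - m - 2 * k := by
  rw [twoRho_apply n m k (by simp; omega)]
  have e1 : ∀ j ∈ Finset.Icc 1 (n+m), (if k < j then rootSign n k j else 0)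
      = (if k < j ∧ j ≤ n then (1:ℤ) else 0) - (if n + 1 ≤ j ∧ j ≤ n + m then 1 else 0) := by
    intro j hj
    simp only [Finset.mem_Icc] at hj
    unfold rootSign
    split_ifs <;> simp_all <;> omega
  have e2 : ∀ i ∈ Finset.Icc 1 (n+m), (if i < k then rootSign n i k else 0)
      = (if 1 ≤ i ∧ i ≤ k - 1 then (1:ℤ) else 0) := by
    intro i hi
    simp only [Finset.mem_Icc] at hi
    unfold rootSign
    split_ifs <;> simp_all <;> omega
  rw [Finset.sum_congr rfl e1, Finset.sum_congr rfl e2, Finset.sum_sub_distrib]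
  rw [count_sum (n+m) (k+1) n _ (by intro j hj; simp at hj; omega),
    count_sum (n+m) (n+1) (n+m) _ (by intro j hj; simp at hj; omega),
    count_sum (n+m) 1 (k-1) _ (by intro j hj; simp at hj; omega)]
  simp only [Nat.card_Icc]
  omega

lemma twoRho_odd (n m k : ℕ) (h1 : n + 1 ≤ k) (h2 : k ≤ n + m) :
    twoRho n m k = 3 * (n : ℤ) + m + 1 - 2 * k := by
  rw [twoRho_apply n m k (by simp; omega)]
  have e1 : ∀ j ∈ Finset.Icc 1 (n+m), (if k < j then rootSign n k j else 0)
      = (if k + 1 ≤ j ∧ j ≤ n + m then (1:ℤ) else 0) := by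
    intro j hj
    simp only [Finset.mem_Icc] at hj
    unfold rootSign
    split_ifs <;> simp_all <;> omega
  have e2 : ∀ i ∈ Finset.Icc 1 (n+m), (if i < k then rootSign n i k else 0)
      = (if n + 1 ≤ i ∧ i ≤ k - 1 then (1:ℤ) else 0) - (if 1 ≤ i ∧ i ≤ n then 1 else 0) := by
    intro i hi
    simp only [Finset.mem_Icc] at hi
    unfold rootSign
    split_ifs <;> simp_all <;> omega
  rw [Finset.sum_congr rfl e1, Finset.sum_congr rfl e2, Finset.sum_sub_distrib]
  rw [count_sum (n+m) (k+1) (n+m) _ (by intro j hj; simp at hj; omega),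
    count_sum (n+m) (n+1) (k-1) _ (by intro j hj; simp at hj; omega),
    count_sum (n+m) 1 n _ (by intro j hj; simp at hj; omega)]
  simp only [Nat.card_Icc]
  omega




/-- if `1 ≤ r ≤ n`, `γ_r = l − 1`, `1 ≤ l' ≤ m`, `γ_{n+l'} = r' − n − 1`,
`μ = γ + ε_r` and `λ = γ + ε_{n+l'}`, then
`⟨λ, λ+2ρ⟩ − ⟨μ, μ+2ρ⟩ = 2(l' − r') − 2(l − r)`. -/
theorem form_diff_even_odd (n m : ℕ) (γ : ℕ → ℤ) (r : ℕ) (l : ℤ) (l' : ℕ) (r' : ℤ)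
    (hr1 : 1 ≤ r) (hrn : r ≤ n) (hγr : γ r = l - 1)
    (hl'1 : 1 ≤ l') (hl'm : l' ≤ m) (hγl' : γ (n + l') = r' - (n : ℤ) - 1) :
    form n m (γ + eps (n + l')) (γ + eps (n + l') + twoRho n m)
      - form n m (γ + eps r) (γ + eps r + twoRho n m)
      = 2 * ((l' : ℤ) - r') - 2 * (l - (r : ℤ)) := by
  set ρ := twoRho n m with hρ
  have hrρ : ρ r = (n : ℤ) + 1 - m - 2 * r := twoRho_even n m r hr1 hrn
  have hlρ : ρ (n + l') = 3 * (n : ℤ) + m + 1 - 2 * (n + l') :=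
    twoRho_odd n m (n + l') (by omega) (by omega)
  unfold form
  rw [← Finset.sum_sub_distrib]
  have key : ∀ i ∈ Finset.Icc 1 (n + m),
      ((if i ≤ n then (1 : ℤ) else -1) * ((γ + eps (n + l')) i * ((γ + eps (n + l') + ρ) i))
        - (if i ≤ n then (1 : ℤ) else -1) * ((γ + eps r) i * ((γ + eps r + ρ) i)))
      = (if i = r then -(2 * l - 1 + ρ r) else 0)
        + (if i = n + l' then -(2 * r' - 2 * (n:ℤ) - 1 + ρ (n + l')) else 0) := by
    intro i hi
    simp only [Pi.add_apply, eps]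
    by_cases h1 : i = r
    · subst h1
      have h2 : ¬ (i = n + l') := by omega
      simp only [if_pos rfl, if_neg h2, if_pos (show i ≤ n from hrn), hγr, if_true,
        eq_self_iff_true]
      ring
    · by_cases h2 : i = n + l'
      · subst h2
        have hin : ¬ (n + l' ≤ n) := by omega
        simp only [if_pos rfl, if_neg h1, if_neg hin, hγl', if_true, eq_self_iff_true]
        ring
      · simp only [if_neg h1, if_neg h2]
        ring
  rw [Finset.sum_congr rfl key, Finset.sum_add_distrib,
    Finset.sum_ite_eq' _ r, Finset.sum_ite_eq' _ (n + l'),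
    if_pos (Finset.mem_Icc.mpr ⟨hr1, by omega⟩),
    if_pos (Finset.mem_Icc.mpr ⟨by omega, by omega⟩)]
  rw [hrρ, hlρ]
  ring


end TwoBoundary
end

section
/- Assume n ≥ 1. Let λ ≠ μ be partitions in 𝒫₀ that are both hook partitions and that differ by a box, i.e., there is a partition γ whose Young diagram is contained in both that of λ and that of μ, with |λ| = |μ| = |γ| + 1; let b_λ be the unique box of λ not in γ. Then ⟨λ̄, λ̄ + 2ρ⟩ − ⟨μ̄, μ̄ + 2ρ⟩ = 4·c(b_λ) − 2(a − p + b − q), where c denotes the content of a box. -/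
/-! Common definitions: the weight lattice `ℤ^{n+m}` is modeled as functions `ℕ → ℤ`
(only the coordinates `1, …, n+m` are relevant), with standard basis vectors `eps i`.
Index `i` has parity 0 if `i ≤ n` and parity 1 otherwise. -/

namespace TwoBoundary

/-- Explicit values of `2ρ` on the coordinates `1, …, n+m`. -/
lemma twoRho_apply_s11 (n m k : ℕ) (h1 : 1 ≤ k) (h2 : k ≤ n + m) :
    twoRho n m k = if k ≤ n then (n:ℤ) - m + 1 - 2*k else 3*(n:ℤ) + m + 1 - 2*k := by
  have hk : k ∈ Finset.Icc 1 (n+m) := Finset.mem_Icc.mpr ⟨h1, h2⟩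
  unfold twoRho
  rw [Finset.sum_apply]
  simp only [Finset.sum_apply, ite_apply, Pi.smul_apply, Pi.sub_apply, Pi.zero_apply,
    smul_eq_mul, eps]
  have step : ∀ i ∈ Finset.Icc 1 (n+m),
      (∑ j ∈ Finset.Icc 1 (n+m), if i < j then rootSign n i j * ((if k = i then (1:ℤ) else 0) - (if k = j then 1 else 0)) else 0)
      = (if k = i then ∑ j ∈ Finset.Icc 1 (n+m), (if i < j then rootSign n i j else 0) else 0)
        - (if i < k then rootSign n i k else 0) := by
    intro i _
    have e1 : ∀ j, (if i < j then rootSign n i j * ((if k = i then (1:ℤ) else 0) - (if k = j then 1 else 0)) else 0)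
        = (if i < j then rootSign n i j else 0) * (if k = i then (1:ℤ) else 0)
          - (if k = j then (if i < j then rootSign n i j else 0) else 0) := by
      intro j
      have hij : i < j → i ≠ j := fun h => Nat.ne_of_lt h
      by_cases h : i < j <;> by_cases h' : k = i <;> by_cases h'' : k = j <;>
        simp_all <;> omega
    rw [Finset.sum_congr rfl (fun j _ => e1 j), Finset.sum_sub_distrib, ← Finset.sum_mul,
      Finset.sum_ite_eq, if_pos hk]
    by_cases h' : k = i <;> simp [h']
  rw [Finset.sum_congr rfl step, Finset.sum_sub_distrib, Finset.sum_ite_eq, if_pos hk]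
  have hfilA : (Finset.Icc 1 (n+m)).filter (fun j => k < j) = Finset.Ioc k (n+m) := by
    ext j; simp only [Finset.mem_filter, Finset.mem_Icc, Finset.mem_Ioc]; omega
  have hfilB : (Finset.Icc 1 (n+m)).filter (fun i => i < k) = Finset.Ico 1 k := by
    ext i; simp only [Finset.mem_filter, Finset.mem_Icc, Finset.mem_Ico]; omega
  rw [← Finset.sum_filter, ← Finset.sum_filter, hfilA, hfilB]
  by_cases hkn : k ≤ n
  · rw [if_pos hkn]
    rw [← Finset.sum_Ioc_consecutive _ hkn (Nat.le_add_right n m)]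
    have e1 : ∀ j ∈ Finset.Ioc k n, rootSign n k j = 1 := by
      intro j hj
      have := (Finset.mem_Ioc.mp hj).2
      simp [rootSign, hkn, this]
    have e2 : ∀ j ∈ Finset.Ioc n (n+m), rootSign n k j = -1 := by
      intro j hj
      have h3 := (Finset.mem_Ioc.mp hj).1
      have h4 : ¬ j ≤ n := by omega
      simp [rootSign, hkn, h4]
    have e3 : ∀ i ∈ Finset.Ico 1 k, rootSign n i k = 1 := by
      intro i hi
      have := (Finset.mem_Ico.mp hi).2
      have h4 : i ≤ n := by omega
      simp [rootSign, hkn, h4]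
    rw [Finset.sum_congr rfl e1, Finset.sum_congr rfl e2, Finset.sum_congr rfl e3,
      Finset.sum_const, Finset.sum_const, Finset.sum_const, Nat.card_Ioc, Nat.card_Ioc,
      Nat.card_Ico, nsmul_eq_mul, nsmul_eq_mul, nsmul_eq_mul, mul_one, mul_one, mul_neg_one]
    omega
  · rw [if_neg hkn]
    have hnk : n + 1 ≤ k := by omega
    rw [← Finset.sum_Ico_consecutive _ (Nat.le_add_left 1 n) hnk]
    have e1 : ∀ j ∈ Finset.Ioc k (n+m), rootSign n k j = 1 := by
      intro j hj
      have h3 := (Finset.mem_Ioc.mp hj).1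
      have h4 : ¬ j ≤ n := by omega
      simp [rootSign, hkn, h4]
    have e2 : ∀ i ∈ Finset.Ico 1 (n+1), rootSign n i k = -1 := by
      intro i hi
      have := (Finset.mem_Ico.mp hi).2
      have h4 : i ≤ n := by omega
      simp [rootSign, hkn, h4]
    have e3 : ∀ i ∈ Finset.Ico (n+1) k, rootSign n i k = 1 := by
      intro i hi
      have := (Finset.mem_Ico.mp hi).1
      have h4 : ¬ i ≤ n := by omega
      simp [rootSign, hkn, h4]
    rw [Finset.sum_congr rfl e1, Finset.sum_congr rfl e2, Finset.sum_congr rfl e3,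
      Finset.sum_const, Finset.sum_const, Finset.sum_const, Nat.card_Ioc, Nat.card_Ico,
      Nat.card_Ico, nsmul_eq_mul, nsmul_eq_mul, nsmul_eq_mul, mul_one, mul_one, mul_neg_one]
    omega

/-- A partition is weakly decreasing on indices `≥ 1`. -/
lemma IsPartition.mono {lam : ℕ → ℕ} (h : IsPartition lam) {a b : ℕ}
    (ha : 1 ≤ a) (hab : a ≤ b) : lam b ≤ lam a := by
  induction b with
  | zero => omega
  | succ b ih =>
    rcases Nat.lt_or_ge a (b+1) with h' | h'
    · exact le_trans (h.2.1 b (by omega)) (ih (by omega))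
    · have : a = b + 1 := by omega
      simp [this]

lemma barWeight_low (n m : ℕ) (lam : ℕ → ℕ) (k : ℕ) (h1 : 1 ≤ k) (h2 : k ≤ n) :
    barWeight n m lam k = (lam k : ℤ) := by simp [barWeight, h1, h2]

lemma barWeight_high (n m : ℕ) (lam : ℕ → ℕ) (k : ℕ) (h1 : n+1 ≤ k) (h2 : k ≤ n+m) :
    barWeight n m lam k = (({t : ℕ | n < t ∧ k - n ≤ lam t}.ncard : ℕ) : ℤ) := by
  have h3 : ¬(1 ≤ k ∧ k ≤ n) := by omega
  simp only [barWeight, if_neg h3, if_pos (And.intro h1 h2)]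

/-- Adding one box in row `r` to a hook partition changes the Casimir value
by `2·content + (n − m)`. -/
lemma casimir_add_box (n m r : ℕ) (hr : 1 ≤ r) (lam gam : ℕ → ℕ)
    (hlam : IsPartition lam) (hgam : IsPartition gam)
    (hHook : lam (n+1) ≤ m)
    (hr' : lam r = gam r + 1)
    (hoth : ∀ k, k ≠ r → lam k = gam k) :
    form n m (barWeight n m lam) (barWeight n m lam + twoRho n m)
      - form n m (barWeight n m gam) (barWeight n m gam + twoRho n m)
      = 2 * ((lam r : ℤ) - r) + ((n:ℤ) - m) := by
  set L := barWeight n m lam with hL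
  set G := barWeight n m gam with hG
  set R := twoRho n m with hR
  set k₀ := if r ≤ n then r else n + lam r with hk₀
  have hlr1 : 1 ≤ lam r := by omega
  have hk₀mem : k₀ ∈ Finset.Icc 1 (n+m) := by
    rw [hk₀]; split
    · exact Finset.mem_Icc.mpr ⟨hr, by omega⟩
    · have hrn : n + 1 ≤ r := by omega
      have hlrm : lam r ≤ m := le_trans (hlam.mono (by omega) hrn) hHook
      exact Finset.mem_Icc.mpr ⟨by omega, by omega⟩
  have hLG : ∀ k ∈ Finset.Icc 1 (n+m), k ≠ k₀ → L k = G k := by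
    intro k hk hne
    obtain ⟨hk1, hk2⟩ := Finset.mem_Icc.mp hk
    by_cases hkn : k ≤ n
    · have hkr : k ≠ r := by
        rw [hk₀] at hne; by_cases h : r ≤ n
        · simpa [h] using hne
        · omega
      rw [hL, hG, barWeight_low _ _ _ _ hk1 hkn, barWeight_low _ _ _ _ hk1 hkn, hoth k hkr]
    · have hkn' : n + 1 ≤ k := by omega
      rw [hL, hG, barWeight_high _ _ _ _ hkn' hk2, barWeight_high _ _ _ _ hkn' hk2]
      congr 2
      ext t
      simp only [Set.mem_setOf_eq]
      by_cases ht : t = r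
      · subst ht
        constructor
        · rintro ⟨h₁, h₂⟩
          refine ⟨h₁, ?_⟩
          have hrn : ¬ t ≤ n := by omega
          rw [hk₀, if_neg hrn] at hne
          omega
        · rintro ⟨h₁, h₂⟩
          exact ⟨h₁, by omega⟩
      · rw [hoth t ht]
  have hform : form n m L (L + R) - form n m G (G + R)
      = ∑ k ∈ Finset.Icc 1 (n+m),
        ((if k ≤ n then (1:ℤ) else -1) * (L k * (L k + R k))
          - (if k ≤ n then (1:ℤ) else -1) * (G k * (G k + R k))) := by
    rw [Finset.sum_sub_distrib]
    simp only [form, Pi.add_apply]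
  rw [hform, Finset.sum_eq_single k₀
    (fun k hk hne => by rw [hLG k hk hne, sub_self])
    (fun h => absurd hk₀mem h)]
  obtain ⟨hk₀1, hk₀2⟩ := Finset.mem_Icc.mp hk₀mem
  by_cases hrn : r ≤ n
  · have hk₀r : k₀ = r := by rw [hk₀, if_pos hrn]
    have hgc : (gam r : ℤ) = (lam r : ℤ) - 1 := by omega
    rw [hk₀r, hL, hG, barWeight_low _ _ _ _ hr hrn, barWeight_low _ _ _ _ hr hrn,
      hR, twoRho_apply_s11 n m r hr (by omega), if_pos hrn, if_pos hrn, hgc]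
    push_cast
    ring
  · have hk₀r : k₀ = n + lam r := by rw [hk₀, if_neg hrn]
    have hrn' : n + 1 ≤ r := by omega
    have hlrm : lam r ≤ m := le_trans (hlam.mono (by omega) hrn') hHook
    have hkn : ¬ (n + lam r ≤ n) := by omega
    have hSlam : {t : ℕ | n < t ∧ (n + lam r) - n ≤ lam t} = ↑(Finset.Icc (n+1) r) := by
      ext t
      simp only [Set.mem_setOf_eq, Finset.coe_Icc, Set.mem_Icc, Nat.add_sub_cancel_left]
      constructor
      · rintro ⟨h₁, h₂⟩
        refine ⟨h₁, ?_⟩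
        by_contra hc
        push_neg at hc
        have m1 : lam t ≤ lam (r+1) := hlam.mono (by omega) (by omega)
        have m2 : lam (r+1) = gam (r+1) := hoth _ (by omega)
        have m3 : gam (r+1) ≤ gam r := hgam.2.1 r (by omega)
        omega
      · rintro ⟨h₁, h₂⟩
        exact ⟨by omega, hlam.mono (by omega) h₂⟩
    have hSgam : {t : ℕ | n < t ∧ (n + lam r) - n ≤ gam t} = ↑(Finset.Icc (n+1) (r-1)) := by
      ext t
      simp only [Set.mem_setOf_eq, Finset.coe_Icc, Set.mem_Icc, Nat.add_sub_cancel_left]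
      constructor
      · rintro ⟨h₁, h₂⟩
        refine ⟨h₁, ?_⟩
        by_contra hc
        push_neg at hc
        by_cases ht : t = r
        · subst ht; omega
        · have m1 : gam t ≤ gam (r+1) := hgam.mono (by omega) (by omega)
          have m3 : gam (r+1) ≤ gam r := hgam.2.1 r (by omega)
          omega
      · rintro ⟨h₁, h₂⟩
        have ht : t ≠ r := by omega
        have m1 : lam r ≤ lam t := hlam.mono (by omega) (by omega)
        rw [← hoth t ht]
        exact ⟨by omega, m1⟩
    rw [hk₀r, hL, hG, barWeight_high _ _ _ _ (by omega) (by omega),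
      barWeight_high _ _ _ _ (by omega) (by omega), hSlam, hSgam,
      Set.ncard_coe_finset, Set.ncard_coe_finset, Nat.card_Icc, Nat.card_Icc,
      hR, twoRho_apply_s11 n m (n + lam r) (by omega) (by omega), if_neg hkn, if_neg hkn]
    have hX : ((r + 1 - (n+1) : ℕ) : ℤ) = (r:ℤ) - n := by omega
    have hY : ((r - 1 + 1 - (n+1) : ℕ) : ℤ) = (r:ℤ) - n - 1 := by omega
    rw [hX, hY]
    push_cast
    ring

/-- if `λ ≠ μ` are hook partitions in `𝒫₀` differing by a box (both
contain a common partition `γ` with one fewer box; `λ = γ + box(i, λ_i)`,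
`μ = γ + box(j, μ_j)`), then
`⟨λ̄, λ̄+2ρ⟩ − ⟨μ̄, μ̄+2ρ⟩ = 4·c(b_λ) − 2(a − p + b − q)` where `b_λ = (i, λ_i)`. -/
theorem form_barWeight_diff_P0 (n m a b p q : ℕ) (hn : 1 ≤ n)
    (ha : 1 ≤ a) (hb : 1 ≤ b) (hp : 1 ≤ p) (hq : 1 ≤ q) (hqp : q ≤ p)
    (lam mu : ℕ → ℕ)
    (hlamP0 : InP0 a b p q lam) (hmuP0 : InP0 a b p q mu)
    (hlamHook : lam (n + 1) ≤ m) (hmuHook : mu (n + 1) ≤ m)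
    (hne : lam ≠ mu)
    (i j : ℕ) (hi : 1 ≤ i) (hj : 1 ≤ j) (hij : i ≠ j)
    (hli : lam i = mu i + 1) (hmj : mu j = lam j + 1)
    (hother : ∀ k, 1 ≤ k → k ≠ i → k ≠ j → lam k = mu k) :
    form n m (barWeight n m lam) (barWeight n m lam + twoRho n m)
      - form n m (barWeight n m mu) (barWeight n m mu + twoRho n m)
      = 4 * ((lam i : ℤ) - i) - 2 * ((a : ℤ) - p + b - q) := by
  obtain ⟨hlamPart, hlam0, hlamSum, hlamMid, hlamMax⟩ := hlamP0
  obtain ⟨hmuPart, hmu0, hmuSum, hmuMid, hmuMax⟩ := hmuP0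
  -- Combinatorial part: `j = p+q+1-i` and `λ_i + λ_j = a + b`.
  have key : j = p + q + 1 - i ∧ i ≤ p + q ∧ lam i + lam j = a + b := by
    have hipq : i ≤ p + q := by
      by_contra h
      have := hlam0 i (by omega)
      omega
    have hiq : ¬ (q + 1 ≤ i ∧ i ≤ p) := by
      rintro ⟨h1, h2⟩
      have := hlamMid i h1 h2
      have := hmuMid i h1 h2
      omega
    rcases le_or_gt i q with hcase | hcase
    · have h1 := hlamSum i hi hcase
      have h2 := hmuSum i hi hcase
      have hj'ne : p + q + 1 - i ≠ i := by omega
      have hmu' : mu (p + q + 1 - i) = lam (p + q + 1 - i) + 1 := by omega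
      have hjj : p + q + 1 - i = j := by
        by_contra hc
        have := hother (p + q + 1 - i) (by omega) hj'ne hc
        omega
      refine ⟨hjj.symm, hipq, ?_⟩
      rw [← hjj]; omega
    · have hip : p + 1 ≤ i := by omega
      set i' := p + q + 1 - i with hi'
      have hi'q : 1 ≤ i' ∧ i' ≤ q := by omega
      have hpq : p + q + 1 - i' = i := by omega
      have h1 := hlamSum i' hi'q.1 hi'q.2
      have h2 := hmuSum i' hi'q.1 hi'q.2
      rw [hpq] at h1 h2
      have hi'ne : i' ≠ i := by omega
      have hmu' : mu i' = lam i' + 1 := by omega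
      have hjj : i' = j := by
        by_contra hc
        have := hother i' (by omega) hi'ne hc
        omega
      refine ⟨by omega, hipq, ?_⟩
      rw [← hjj]; omega
  obtain ⟨hjval, hipq, hsum⟩ := key
  -- The intermediate partition γ = min(λ, μ).
  have hgamPart : IsPartition (fun k => min (lam k) (mu k)) := by
    refine ⟨by simp [hlamPart.1, hmuPart.1], fun k hk => ?_, ?_⟩
    · exact min_le_min (hlamPart.2.1 k hk) (hmuPart.2.1 k hk)
    · obtain ⟨N1, hN1⟩ := hlamPart.2.2
      exact ⟨N1, fun k hk => by simp [hN1 k hk]⟩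
  have hbox1 : lam i = (fun k => min (lam k) (mu k)) i + 1 := by
    simp only []
    omega
  have hoth1 : ∀ k, k ≠ i → lam k = (fun k => min (lam k) (mu k)) k := by
    intro k hk
    simp only []
    by_cases hkj : k = j
    · subst hkj; omega
    · rcases Nat.eq_zero_or_pos k with h0 | h1
      · subst h0; simp [hlamPart.1, hmuPart.1]
      · have := hother k h1 hk hkj
        omega
  have hbox2 : mu j = (fun k => min (lam k) (mu k)) j + 1 := by
    simp only []
    omega
  have hoth2 : ∀ k, k ≠ j → mu k = (fun k => min (lam k) (mu k)) k := by
    intro k hk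
    simp only []
    by_cases hki : k = i
    · subst hki; omega
    · rcases Nat.eq_zero_or_pos k with h0 | h1
      · subst h0; simp [hlamPart.1, hmuPart.1]
      · have := hother k h1 hki hk
        omega
  have h1 := casimir_add_box n m i hi lam (fun k => min (lam k) (mu k))
    hlamPart hgamPart hlamHook hbox1 hoth1
  have h2 := casimir_add_box n m j hj mu (fun k => min (lam k) (mu k))
    hmuPart hgamPart hmuHook hbox2 hoth2
  have hcj : (j:ℤ) = (p:ℤ) + q + 1 - i := by omega
  have hml : (mu j : ℤ) = (a:ℤ) + b - lam i + 1 := by omega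
  linarith [h1, h2]

end TwoBoundary
end
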